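/- arXiv:2107.04518 — 3 statements merged into one kernel-verified Lean document; each statement's English description precedes it below -/
import Mathlib

section
/- Let $p \ge 3$, let $v_1,\dots,v_k \in \mathbb{R}^d$ be orthonormal, let $\lambda_1 > 0$ and $\lambda_1 \ge |\lambda_j|$ for all $j$, and let $a$ be a unit vector satisfying $0.5\, a^\top v_1 > |a^\top v_j|$ for all $j \ge 2$ (with $a^\top v_1 > 0$). For fixed positive constants $m > 0$ define $S_j = \lambda_j \sum_{s=0}^{\lfloor (p-3)/2\rfloor} \frac{(1-\frac{1}{2p})^{p-2s-1}(\frac{1}{2p})^{2s+1}}{m^s}\binom{p}{2s+1}(v_j^\top a)^{p-2s-1}$, and $G(a) = \sum_{j=1}^k S_j v_j$. Then $\tan\theta(G(a), v_1) \le \frac{1}{2}\tan\theta(a, v_1)$, where $\tan\theta(x, v_1) = \|V^\top x\|_2 / |v_1^\top x|$ with $V = [v_2,\dots,v_k]$. -/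
open Finset

set_option maxHeartbeats 1000000 in
/-- The idealized zeroth-order update `G(a) = ∑ⱼ Sⱼ vⱼ` contracts the tangent of
the angle to the top component `v₁` by a factor `1/2`. -/
theorem population_zeroth_order_contraction {d k : ℕ} (hk : 0 < k)
    (p : ℕ) (hp : 3 ≤ p) (m : ℝ) (hm : 0 < m)
    (v : Fin k → EuclideanSpace ℝ (Fin d))
    (hv : Orthonormal ℝ v)
    (lam : Fin k → ℝ)
    (hlam1 : 0 < lam ⟨0, hk⟩)
    (hlam : ∀ j, |lam j| ≤ lam ⟨0, hk⟩)
    (a : EuclideanSpace ℝ (Fin d)) (ha : ‖a‖ = 1)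
    (hpos : 0 < (inner ℝ (v ⟨0, hk⟩) a : ℝ))
    (hbias : ∀ j : Fin k, j ≠ ⟨0, hk⟩ →
      |(inner ℝ (v j) a : ℝ)| < 0.5 * (inner ℝ (v ⟨0, hk⟩) a : ℝ))
    (S : Fin k → ℝ)
    (hS : ∀ j, S j = lam j * ∑ s ∈ Finset.range ((p - 3) / 2 + 1),
      ((1 - 1 / (2 * (p : ℝ))) ^ (p - 2 * s - 1) * (1 / (2 * (p : ℝ))) ^ (2 * s + 1)
        / m ^ s) * (Nat.choose p (2 * s + 1) : ℝ)
        * ((inner ℝ (v j) a : ℝ)) ^ (p - 2 * s - 1))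
    (G : EuclideanSpace ℝ (Fin d)) (hG : G = ∑ j, S j • v j) :
    Real.sqrt (∑ j ∈ Finset.univ.filter (· ≠ (⟨0, hk⟩ : Fin k)),
        ((inner ℝ (v j) G : ℝ)) ^ 2) / |(inner ℝ (v ⟨0, hk⟩) G : ℝ)| ≤
      (1 / 2) *
        (Real.sqrt (∑ j ∈ Finset.univ.filter (· ≠ (⟨0, hk⟩ : Fin k)),
          ((inner ℝ (v j) a : ℝ)) ^ 2) / |(inner ℝ (v ⟨0, hk⟩) a : ℝ)|) := by
  set i0 : Fin k := ⟨0, hk⟩ with hi0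
  have hinner : ∀ j, (inner ℝ (v j) G : ℝ) = S j := by
    intro j
    rw [hG]
    exact hv.inner_right_fintype S j
  set c : Fin k → ℝ := fun j => (inner ℝ (v j) a : ℝ) with hc
  set N : ℕ := (p - 3) / 2 + 1 with hN
  set w : ℕ → ℝ := fun s =>
    (1 - 1 / (2 * (p : ℝ))) ^ (p - 2 * s - 1) * (1 / (2 * (p : ℝ))) ^ (2 * s + 1)
      / m ^ s * (Nat.choose p (2 * s + 1) : ℝ) with hw
  have hSw : ∀ j, S j = lam j * ∑ s ∈ Finset.range N, w s * c j ^ (p - 2 * s - 1) := by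
    intro j; rw [hS]
  have h2p : (0:ℝ) < 2 * p := by positivity
  have h2p' : (1:ℝ) ≤ 2 * p := by
    have : (3:ℝ) ≤ p := by exact_mod_cast hp
    linarith
  have hbase : (0:ℝ) ≤ 1 - 1 / (2 * (p:ℝ)) := by
    have : 1 / (2 * (p:ℝ)) ≤ 1 := by rw [div_le_one h2p]; linarith
    linarith
  have hwnonneg : ∀ s, 0 ≤ w s := by
    intro s
    apply mul_nonneg (div_nonneg (mul_nonneg (pow_nonneg hbase _) (by positivity)) (by positivity))
    positivity
  have hw0 : 0 < w 0 := by
    have hbase' : (0:ℝ) < 1 - 1 / (2 * (p:ℝ)) := by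
      have : 1 / (2 * (p:ℝ)) < 1 := by
        rw [div_lt_one h2p]
        have : (3:ℝ) ≤ p := by exact_mod_cast hp
        linarith
      linarith
    have hch : 0 < (Nat.choose p (2 * 0 + 1) : ℝ) := by
      simp only [Nat.mul_zero, Nat.zero_add, Nat.choose_one_right]
      exact_mod_cast lt_of_lt_of_le (by norm_num) hp
    exact mul_pos (div_pos (mul_pos (pow_pos hbase' _) (by positivity)) (by positivity)) hch
  have hexp : ∀ s, s ∈ Finset.range N → p - 2 * s - 1 = (p - 2 * s - 2) + 1 ∧
      1 ≤ p - 2 * s - 2 := by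
    intro s hs
    have hs' : s ≤ (p - 3) / 2 := by
      have := Finset.mem_range.mp hs; omega
    omega
  have hc0 : 0 < c i0 := hpos
  set K : ℝ := lam i0 * ∑ s ∈ Finset.range N, w s * (0.5 * c i0) ^ (p - 2 * s - 2)
    with hK
  have hKpos : 0 < K := by
    apply mul_pos hlam1
    apply Finset.sum_pos'
    · intro s _
      exact mul_nonneg (hwnonneg s) (by positivity)
    · refine ⟨0, Finset.mem_range.mpr (by omega), mul_pos hw0 (by positivity)⟩
  -- Bound off-component coefficients
  have hA : ∀ j, j ≠ i0 → |S j| ≤ K * |c j| := by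
    intro j hj
    rw [hSw, abs_mul]
    have hsum : |∑ s ∈ Finset.range N, w s * c j ^ (p - 2 * s - 1)| ≤
        ∑ s ∈ Finset.range N, w s * ((0.5 * c i0) ^ (p - 2 * s - 2) * |c j|) := by
      refine (Finset.abs_sum_le_sum_abs _ _).trans (Finset.sum_le_sum ?_)
      intro s hs
      rw [abs_mul, abs_of_nonneg (hwnonneg s), abs_pow]
      obtain ⟨he, hn⟩ := hexp s hs
      rw [he, pow_succ]
      refine mul_le_mul_of_nonneg_left ?_ (hwnonneg s)
      refine mul_le_mul ?_ le_rfl (abs_nonneg _) (by positivity)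
      exact pow_le_pow_left₀ (abs_nonneg _) (le_of_lt (hbias j hj)) _
    calc |lam j| * |∑ s ∈ Finset.range N, w s * c j ^ (p - 2 * s - 1)|
        ≤ lam i0 * ∑ s ∈ Finset.range N, w s * ((0.5 * c i0) ^ (p - 2 * s - 2) * |c j|) := by
          refine mul_le_mul (hlam j) hsum (abs_nonneg _) (le_of_lt hlam1)
      _ = K * |c j| := by
          rw [hK]
          rw [mul_assoc, Finset.sum_mul]
          congr 1
          refine Finset.sum_congr rfl fun s _ => by ring
  -- Lower bound on the top coefficient
  have hB : 2 * K * c i0 ≤ S i0 := by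
    rw [hSw, hK]
    have hsum : ∑ s ∈ Finset.range N, w s * (2 * ((0.5 * c i0) ^ (p - 2 * s - 2) * c i0)) ≤
        ∑ s ∈ Finset.range N, w s * c i0 ^ (p - 2 * s - 1) := by
      refine Finset.sum_le_sum fun s hs => ?_
      refine mul_le_mul_of_nonneg_left ?_ (hwnonneg s)
      obtain ⟨he, hn⟩ := hexp s hs
      rw [he, pow_succ, mul_pow]
      have h05 : (0.5:ℝ) ^ (p - 2 * s - 2) ≤ 0.5 ^ 1 :=
        pow_le_pow_of_le_one (by norm_num) (by norm_num) hn
      have hcn : (0:ℝ) ≤ c i0 ^ (p - 2 * s - 2) := by positivity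
      have hmul := mul_le_mul_of_nonneg_right h05 (mul_nonneg hcn hc0.le)
      nlinarith [hmul]
    calc 2 * (lam i0 * ∑ s ∈ Finset.range N, w s * (0.5 * c i0) ^ (p - 2 * s - 2)) * c i0
        = lam i0 * ∑ s ∈ Finset.range N, w s * (2 * ((0.5 * c i0) ^ (p - 2 * s - 2) * c i0)) := by
          have hrw : ∑ s ∈ Finset.range N, w s * (2 * ((0.5 * c i0) ^ (p - 2 * s - 2) * c i0)) =
              (2 * c i0) * ∑ s ∈ Finset.range N, w s * (0.5 * c i0) ^ (p - 2 * s - 2) := by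
            rw [Finset.mul_sum]
            exact Finset.sum_congr rfl fun s _ => by ring
          rw [hrw]; ring
      _ ≤ lam i0 * ∑ s ∈ Finset.range N, w s * c i0 ^ (p - 2 * s - 1) :=
          mul_le_mul_of_nonneg_left hsum (le_of_lt hlam1)
  have hS0pos : 0 < S i0 := lt_of_lt_of_le (by positivity) hB
  -- rewrite goal
  simp only [hinner]
  have hnum : Real.sqrt (∑ j ∈ Finset.univ.filter (· ≠ i0), S j ^ 2) ≤
      K * Real.sqrt (∑ j ∈ Finset.univ.filter (· ≠ i0), c j ^ 2) := by
    have h1 : ∑ j ∈ Finset.univ.filter (· ≠ i0), S j ^ 2 ≤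
        K ^ 2 * ∑ j ∈ Finset.univ.filter (· ≠ i0), c j ^ 2 := by
      rw [Finset.mul_sum]
      refine Finset.sum_le_sum fun j hj => ?_
      have hj' : j ≠ i0 := by simpa using (Finset.mem_filter.mp hj).2
      have := hA j hj'
      have h2 : |S j| ^ 2 ≤ (K * |c j|) ^ 2 :=
        pow_le_pow_left₀ (abs_nonneg _) this 2
      calc S j ^ 2 = |S j| ^ 2 := (sq_abs _).symm
        _ ≤ (K * |c j|) ^ 2 := h2
        _ = K ^ 2 * c j ^ 2 := by rw [mul_pow, sq_abs]
    calc Real.sqrt (∑ j ∈ Finset.univ.filter (· ≠ i0), S j ^ 2)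
        ≤ Real.sqrt (K ^ 2 * ∑ j ∈ Finset.univ.filter (· ≠ i0), c j ^ 2) :=
          Real.sqrt_le_sqrt h1
      _ = K * Real.sqrt (∑ j ∈ Finset.univ.filter (· ≠ i0), c j ^ 2) := by
          rw [Real.sqrt_mul (sq_nonneg K), Real.sqrt_sq (le_of_lt hKpos)]
  have hden : 2 * K * c i0 ≤ |S i0| := by
    rw [abs_of_pos hS0pos]; exact hB
  have hfinal : Real.sqrt (∑ j ∈ Finset.univ.filter (· ≠ i0), S j ^ 2) / |S i0| ≤
      (K * Real.sqrt (∑ j ∈ Finset.univ.filter (· ≠ i0), c j ^ 2)) / (2 * K * c i0) := by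
    refine div_le_div₀ (mul_nonneg (le_of_lt hKpos) (Real.sqrt_nonneg _)) hnum
      (by positivity) hden
  refine hfinal.trans (le_of_eq ?_)
  rw [abs_of_pos hc0]
  have haux : ∀ B : ℝ, K * B / (2 * K * c i0) = 1 / 2 * (B / c i0) := by
    intro B
    rw [show 2 * K * c i0 = K * (2 * c i0) by ring,
      mul_div_mul_left _ _ (ne_of_gt hKpos)]
    ring
  exact haux _
end

section
/- Let $p \ge 3$ be odd, let $\lambda_1 > 0$, $|\lambda_j| \le \lambda_1$, and let $a$ be a unit vector with $|v_j^\top a| \le |v_1^\top a|$ for $j \ge 2$, with $v_1^\top a > 0$. With $S_j$ as defined via $S_j = \lambda_j \sum_{s=0}^{(p-3)/2} \frac{c_s}{m^s} (v_j^\top a)^{p-2s-1}$ for positive constants $c_s = (1-\frac{1}{2p})^{p-2s-1}(\frac{1}{2p})^{2s+1}\binom{p}{2s+1}$ and $m > 0$, it holds that $|S_j| \le \frac{|\lambda_j|}{\lambda_1}\cdot\frac{(v_j^\top a)^2}{(v_1^\top a)^2}\, S_1$ for all $j \ge 2$. -/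
open Finset

/-! Every exponent `p - 2s - 1` with `s ≤ (p - 3) / 2` is at least `2` and every coefficient
`cₛ / mˢ` is nonnegative, so each term of `Sⱼ` splits off `(vⱼᵀa)²` and the remaining power of
`|vⱼᵀa|` is at most the same power of `v₁ᵀa`. -/

lemma abs_pow_le_sq_div_sq_mul_pow {x y : ℝ} (hxy : |x| ≤ y) {n : ℕ} (hn : 2 ≤ n) :
    |x ^ n| ≤ x ^ 2 / y ^ 2 * y ^ n := by
  obtain ⟨n, rfl⟩ := Nat.exists_eq_add_of_le hn
  rcases ((abs_nonneg x).trans hxy).eq_or_lt with rfl | hy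
  · simp [abs_nonpos_iff.mp hxy]
  · calc |x ^ (2 + n)| = x ^ 2 * |x| ^ n := by rw [abs_pow, pow_add, sq_abs]
      _ ≤ x ^ 2 * y ^ n := by gcongr
      _ = x ^ 2 / y ^ 2 * y ^ (2 + n) := by field_simp; ring

lemma abs_sum_mul_pow_le {ι : Type*} (t : Finset ι) {c : ι → ℝ} {e : ι → ℕ}
    (hc : ∀ i ∈ t, 0 ≤ c i) (he : ∀ i ∈ t, 2 ≤ e i) {x y : ℝ} (hxy : |x| ≤ y) :
    |∑ i ∈ t, c i * x ^ e i| ≤ x ^ 2 / y ^ 2 * ∑ i ∈ t, c i * y ^ e i := by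
  rw [Finset.mul_sum]
  refine (abs_sum_le_sum_abs _ _).trans (Finset.sum_le_sum fun i hi => ?_)
  rw [abs_mul, abs_of_nonneg (hc i hi), mul_left_comm]
  exact mul_le_mul_of_nonneg_left (abs_pow_le_sq_div_sq_mul_pow hxy (he i hi)) (hc i hi)

lemma one_sub_one_div_two_mul_natCast_nonneg (p : ℕ) : 0 ≤ 1 - 1 / (2 * (p : ℝ)) := by
  rcases p.eq_zero_or_pos with rfl | hp
  · simp
  · have : (1 : ℝ) ≤ p := by exact_mod_cast hp
    rw [sub_nonneg, div_le_one (by positivity)]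
    linarith

theorem coefficient_comparison_odd_general {d k : ℕ} (hk : 0 < k)
    (p : ℕ) (hp : 3 ≤ p) (m : ℝ) (hm : 0 < m)
    (v : Fin k → EuclideanSpace ℝ (Fin d))
    (lam : Fin k → ℝ)
    (hlam1 : 0 < lam ⟨0, hk⟩)
    (a : EuclideanSpace ℝ (Fin d))
    (hpos : 0 < (inner ℝ (v ⟨0, hk⟩) a : ℝ))
    (hle : ∀ j : Fin k, j ≠ ⟨0, hk⟩ →
      |(inner ℝ (v j) a : ℝ)| ≤ |(inner ℝ (v ⟨0, hk⟩) a : ℝ)|)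
    (S : Fin k → ℝ)
    (hS : ∀ j, S j = lam j * ∑ s ∈ Finset.range ((p - 3) / 2 + 1),
      ((1 - 1 / (2 * (p : ℝ))) ^ (p - 2 * s - 1) * (1 / (2 * (p : ℝ))) ^ (2 * s + 1)
        * (Nat.choose p (2 * s + 1) : ℝ) / m ^ s)
        * ((inner ℝ (v j) a : ℝ)) ^ (p - 2 * s - 1)) :
    ∀ j : Fin k, j ≠ ⟨0, hk⟩ →
      |S j| ≤ (|lam j| / lam ⟨0, hk⟩) *
        (((inner ℝ (v j) a : ℝ)) ^ 2 / ((inner ℝ (v ⟨0, hk⟩) a : ℝ)) ^ 2) *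
        S ⟨0, hk⟩ := by
  intro j hj
  have hxj : |(inner ℝ (v j) a : ℝ)| ≤ inner ℝ (v ⟨0, hk⟩) a := abs_of_pos hpos ▸ hle j hj
  have hq := one_sub_one_div_two_mul_natCast_nonneg p
  have hsum := abs_sum_mul_pow_le (range ((p - 3) / 2 + 1))
    (c := fun s => (1 - 1 / (2 * (p : ℝ))) ^ (p - 2 * s - 1) * (1 / (2 * (p : ℝ))) ^ (2 * s + 1)
      * (Nat.choose p (2 * s + 1) : ℝ) / m ^ s) (e := fun s => p - 2 * s - 1)
    (fun s _ => div_nonneg (mul_nonneg (mul_nonneg (pow_nonneg hq _) (by positivity))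
      (by positivity)) (pow_nonneg hm.le s))
    (fun s hs => by rw [mem_range] at hs; omega) hxj
  rw [hS j, hS ⟨0, hk⟩, abs_mul]
  calc _ ≤ |lam j| * (_ * _) := mul_le_mul_of_nonneg_left hsum (abs_nonneg _)
    _ = _ := by field_simp

/-- Coefficient comparison for odd degree `p`: with
`Sⱼ = λⱼ ∑ₛ (cₛ/mˢ) (vⱼᵀa)^{p-2s-1}`, for every `j ≥ 2` one has
`|Sⱼ| ≤ (|λⱼ|/λ₁) · ((vⱼᵀa)²/(v₁ᵀa)²) · S₁`. -/
theorem coefficient_comparison_odd {d k : ℕ} (hk : 0 < k)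
    (p : ℕ) (hp : 3 ≤ p) (hodd : Odd p) (m : ℝ) (hm : 0 < m)
    (v : Fin k → EuclideanSpace ℝ (Fin d))
    (hv : Orthonormal ℝ v)
    (lam : Fin k → ℝ)
    (hlam1 : 0 < lam ⟨0, hk⟩)
    (hlam : ∀ j, |lam j| ≤ lam ⟨0, hk⟩)
    (a : EuclideanSpace ℝ (Fin d)) (ha : ‖a‖ = 1)
    (hpos : 0 < (inner ℝ (v ⟨0, hk⟩) a : ℝ))
    (hle : ∀ j : Fin k, j ≠ ⟨0, hk⟩ →
      |(inner ℝ (v j) a : ℝ)| ≤ |(inner ℝ (v ⟨0, hk⟩) a : ℝ)|)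
    (S : Fin k → ℝ)
    (hS : ∀ j, S j = lam j * ∑ s ∈ Finset.range ((p - 3) / 2 + 1),
      ((1 - 1 / (2 * (p : ℝ))) ^ (p - 2 * s - 1) * (1 / (2 * (p : ℝ))) ^ (2 * s + 1)
        * (Nat.choose p (2 * s + 1) : ℝ) / m ^ s)
        * ((inner ℝ (v j) a : ℝ)) ^ (p - 2 * s - 1)) :
    ∀ j : Fin k, j ≠ ⟨0, hk⟩ →
      |S j| ≤ (|lam j| / lam ⟨0, hk⟩) *
        (((inner ℝ (v j) a : ℝ)) ^ 2 / ((inner ℝ (v ⟨0, hk⟩) a : ℝ)) ^ 2) *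
        S ⟨0, hk⟩ :=
  coefficient_comparison_odd_general hk p hp m hm v lam hlam1 a hpos hle S hS
end

section
/- Let $a, a^+, v_1 \in \mathbb{R}^d$ with $v_1$ a unit vector, and let $V \in \mathbb{R}^{d \times (k-1)}$ have orthonormal columns orthogonal to $v_1$. Suppose $a^+ = G + g$ where $G, g \in \mathrm{span}(v_1, V)$, $\|V^\top G\| \le \frac{1}{2}\tan\theta(a, v_1)\,|v_1^\top G|$, $|v_1^\top g| \le 0.2\,|v_1^\top G|$, and $v_1^\top G \ne 0$. Then $\tan\theta(a^+, v_1) \le \frac{1.25}{2}\tan\theta(a, v_1) + \frac{5}{4}\cdot\frac{\|g\|}{|v_1^\top G|}$, where $\tan\theta(x, v_1) = \|V^\top x\|/|v_1^\top x|$. -/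
/-!
The numerator `‖Vᵀa⁺‖` is at most `‖VᵀG‖ + ‖Vᵀg‖ ≤ ½ tanθ(a, v₁) |v₁ᵀG| + ‖g‖` by the triangle
inequality and Bessel's inequality, while the denominator satisfies
`|v₁ᵀa⁺| ≥ |v₁ᵀG| - |v₁ᵀg| ≥ 0.8 |v₁ᵀG|`; dividing gives the claim, as `1 / 0.8 = 5 / 4`.
-/

open scoped RealInnerProductSpace

section CoefficientNorm

variable {ι E : Type*} [Fintype ι] [NormedAddCommGroup E] [InnerProductSpace ℝ E]

theorem sqrt_sum_inner_sq_eq_norm (w : ι → E) (x : E) :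
    √(∑ i, ⟪w i, x⟫ ^ 2) = ‖(WithLp.toLp 2 fun i ↦ ⟪w i, x⟫ : EuclideanSpace ℝ ι)‖ := by
  simp [EuclideanSpace.norm_eq]

theorem sqrt_sum_inner_sq_add_le (w : ι → E) (x y : E) :
    √(∑ i, ⟪w i, x + y⟫ ^ 2) ≤ √(∑ i, ⟪w i, x⟫ ^ 2) + √(∑ i, ⟪w i, y⟫ ^ 2) := by
  simp only [sqrt_sum_inner_sq_eq_norm]
  simp only [inner_add_right]
  exact norm_add_le (WithLp.toLp 2 fun i ↦ ⟪w i, x⟫ : EuclideanSpace ℝ ι)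
    (WithLp.toLp 2 fun i ↦ ⟪w i, y⟫)

theorem Orthonormal.sqrt_sum_inner_sq_le_norm {w : ι → E} (hw : Orthonormal ℝ w) (x : E) :
    √(∑ i, ⟪w i, x⟫ ^ 2) ≤ ‖x‖ := by
  have hBessel := hw.sum_inner_products_le (s := Finset.univ) x
  simp only [Real.norm_eq_abs, sq_abs] at hBessel
  exact Real.sqrt_le_iff.mpr ⟨norm_nonneg x, hBessel⟩

end CoefficientNorm

theorem perturbed_power_iteration_step_general {d k : ℕ}
    (v1 : EuclideanSpace ℝ (Fin d))
    (w : Fin (k - 1) → EuclideanSpace ℝ (Fin d))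
    (hw : Orthonormal ℝ w)
    (a aplus G g : EuclideanSpace ℝ (Fin d))
    (haplus : aplus = G + g)
    (hGne : (inner ℝ v1 G : ℝ) ≠ 0)
    (hcross : Real.sqrt (∑ i, ((inner ℝ (w i) G : ℝ)) ^ 2) ≤
      (1 / 2) * (Real.sqrt (∑ i, ((inner ℝ (w i) a : ℝ)) ^ 2) / |(inner ℝ v1 a : ℝ)|) *
        |(inner ℝ v1 G : ℝ)|)
    (hg : |(inner ℝ v1 g : ℝ)| ≤ 0.2 * |(inner ℝ v1 G : ℝ)|) :
    Real.sqrt (∑ i, ((inner ℝ (w i) aplus : ℝ)) ^ 2) / |(inner ℝ v1 aplus : ℝ)| ≤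
      (1.25 / 2) * (Real.sqrt (∑ i, ((inner ℝ (w i) a : ℝ)) ^ 2) / |(inner ℝ v1 a : ℝ)|) +
        (5 / 4) * (‖g‖ / |(inner ℝ v1 G : ℝ)|) := by
  set T := √(∑ i, ⟪w i, a⟫ ^ 2) / |⟪v1, a⟫|
  have hc : 0 < |⟪v1, G⟫| := abs_pos.mpr hGne
  have hnum : √(∑ i, ⟪w i, aplus⟫ ^ 2) ≤ 1 / 2 * T * |⟪v1, G⟫| + ‖g‖ :=
    haplus ▸ (sqrt_sum_inner_sq_add_le w G g).trans
      (add_le_add hcross (hw.sqrt_sum_inner_sq_le_norm g))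
  have hden : 0.8 * |⟪v1, G⟫| ≤ |⟪v1, aplus⟫| := by
    rw [haplus, inner_add_right]
    linarith [abs_sub_abs_le_abs_add ⟪v1, G⟫ ⟪v1, g⟫]
  calc √(∑ i, ⟪w i, aplus⟫ ^ 2) / |⟪v1, aplus⟫|
      ≤ (1 / 2 * T * |⟪v1, G⟫| + ‖g‖) / (0.8 * |⟪v1, G⟫|) :=
        div_le_div₀ (by positivity) hnum (by positivity) hden
    _ = 1.25 / 2 * T + 5 / 4 * (‖g‖ / |⟪v1, G⟫|) := by
        field_simp
        ring

/-- One step of perturbed power iteration: if `a⁺ = G + g` where `G, g` lie in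
the span of `v₁` and the orthonormal family `w`, the cross component of `G` is
controlled by `½ tanθ(a,v₁)·|v₁ᵀG|`, and `|v₁ᵀg| ≤ 0.2 |v₁ᵀG|`, then
`tanθ(a⁺,v₁) ≤ (1.25/2) tanθ(a,v₁) + (5/4)·‖g‖/|v₁ᵀG|`. -/
theorem perturbed_power_iteration_step {d k : ℕ}
    (v1 : EuclideanSpace ℝ (Fin d)) (hv1 : ‖v1‖ = 1)
    (w : Fin (k - 1) → EuclideanSpace ℝ (Fin d))
    (hw : Orthonormal ℝ w)
    (hwv1 : ∀ i, inner ℝ (w i) v1 = (0 : ℝ))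
    (a aplus G g : EuclideanSpace ℝ (Fin d))
    (hGspan : G ∈ Submodule.span ℝ (insert v1 (Set.range w)))
    (hgspan : g ∈ Submodule.span ℝ (insert v1 (Set.range w)))
    (haplus : aplus = G + g)
    (hGne : (inner ℝ v1 G : ℝ) ≠ 0)
    (hcross : Real.sqrt (∑ i, ((inner ℝ (w i) G : ℝ)) ^ 2) ≤
      (1 / 2) * (Real.sqrt (∑ i, ((inner ℝ (w i) a : ℝ)) ^ 2) / |(inner ℝ v1 a : ℝ)|) *
        |(inner ℝ v1 G : ℝ)|)
    (hg : |(inner ℝ v1 g : ℝ)| ≤ 0.2 * |(inner ℝ v1 G : ℝ)|) :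
    Real.sqrt (∑ i, ((inner ℝ (w i) aplus : ℝ)) ^ 2) / |(inner ℝ v1 aplus : ℝ)| ≤
      (1.25 / 2) * (Real.sqrt (∑ i, ((inner ℝ (w i) a : ℝ)) ^ 2) / |(inner ℝ v1 a : ℝ)|) +
        (5 / 4) * (‖g‖ / |(inner ℝ v1 G : ℝ)|) :=
  perturbed_power_iteration_step_general v1 w hw a aplus G g haplus hGne hcross hg
end
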